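/- If p : ℝ^d×[0,T] → (0,∞) is C² and satisfies ∂ₜp(x,t) − (β(t)/2)( ∇·(p(x,t) x) + σ² Δp(x,t) ) = 0 on ℝ^d×[0,T], then the ratio h(x,t) := p(x,t)/φ(x) satisfies ∂ₜh(x,t) − (β(t)/2)( −∇h(x,t)·x + σ² Δh(x,t) ) = 0 on ℝ^d×[0,T]. -/

import Mathlib

/-!
Put `ψ = 1/φ`, a multiple of `exp (‖x‖² / (2σ²))`, so that `∇ψ = (ψ/σ²) x`. For `h = p ψ` this
gives `∇h = ψ ∇p + (h/σ²) x`, and taking the divergence,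
`σ² Δh = ψ ⟪∇p, x⟫ + σ² ψ Δp + ⟪∇h, x⟫ + d h`.
Hence `-⟪∇h, x⟫ + σ² Δh = ψ (∇·(p x) + σ² Δp)`, while `∂ₜh = ψ ∂ₜp`: the equation for `h` is the
Fokker–Planck equation for `p` multiplied by `ψ`.
-/

open MeasureTheory Real Set
open scoped RealInnerProductSpace

noncomputable section

/-- `ℝ^d` as a Euclidean space. -/
abbrev E (d : ℕ) := EuclideanSpace ℝ (Fin d)

/-- Spatial divergence of a vector field on `ℝ^d`. -/
def spaceDiv {d : ℕ} (F : E d → E d) (x : E d) : ℝ :=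
  ∑ i, fderiv ℝ F x (EuclideanSpace.single i 1) i

/-- Laplacian of a scalar function on `ℝ^d`. -/
def lap {d : ℕ} (u : E d → ℝ) (x : E d) : ℝ := spaceDiv (fun y => gradient u y) x

/-- The Borel measure on `ℝ^d` with density `ρ` with respect to Lebesgue measure. -/
def densMeasure {d : ℕ} (ρ : E d → ℝ) : Measure (E d) :=
  volume.withDensity fun x => ENNReal.ofReal (ρ x)

/-- `γ` is a coupling of `μ` and `ν`. -/
def IsCoupling {d : ℕ} (γ : Measure (E d × E d)) (μ ν : Measure (E d)) : Prop :=
  γ.map Prod.fst = μ ∧ γ.map Prod.snd = ν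

/-- The 2-Wasserstein distance between two measures on `ℝ^d`. -/
def W2 {d : ℕ} (μ ν : Measure (E d)) : ℝ :=
  Real.sqrt (sInf {c : ℝ | ∃ γ : Measure (E d × E d),
    IsProbabilityMeasure γ ∧ IsCoupling γ μ ν ∧ c = ∫ z, ‖z.1 - z.2‖ ^ 2 ∂γ})

open scoped Gradient

section Gradient

variable {F : Type*} [NormedAddCommGroup F] [InnerProductSpace ℝ F] [CompleteSpace F]

theorem HasGradientAt.mul {f g : F → ℝ} {f' g' x : F}
    (hf : HasGradientAt f f' x) (hg : HasGradientAt g g' x) :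
    HasGradientAt (fun y => f y * g y) (f x • g' + g x • f') x := by
  rw [hasGradientAt_iff_hasFDerivAt] at *
  simpa only [map_add, map_smul] using hf.fun_mul hg

theorem hasGradientAt_const_mul_exp_mul_norm_sq (c a : ℝ) (x : F) :
    HasGradientAt (fun y => c * exp (a * ‖y‖ ^ 2)) ((2 * a * (c * exp (a * ‖x‖ ^ 2))) • x) x := by
  rw [hasGradientAt_iff_hasFDerivAt]
  refine (((hasStrictFDerivAt_norm_sq x).hasFDerivAt.const_mul a).exp.const_mul c).congr_fderiv ?_
  ext v
  simp [InnerProductSpace.toDual_apply_apply]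
  ring

theorem ContDiff.differentiable_gradient {f : F → ℝ} (hf : ContDiff ℝ 2 f) :
    Differentiable ℝ (∇ f) :=
  (InnerProductSpace.toDual ℝ F).symm.differentiable.comp
    ((hf.fderiv_right (m := 1) (by norm_num)).differentiable (by norm_num))

end Gradient

theorem EuclideanSpace.strongDual_apply_eq_sum {ι : Type*} [Fintype ι] [DecidableEq ι]
    (ℓ : StrongDual ℝ (EuclideanSpace ℝ ι)) (v : EuclideanSpace ℝ ι) :
    ℓ v = ∑ i, v i * ℓ (EuclideanSpace.single i 1) := by
  conv_lhs => rw [← (EuclideanSpace.basisFun ι ℝ).sum_repr v]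
  simp [map_sum]

section Divergence

variable {d : ℕ}

theorem spaceDiv_add {F G : E d → E d} {x : E d}
    (hF : DifferentiableAt ℝ F x) (hG : DifferentiableAt ℝ G x) :
    spaceDiv (fun y => F y + G y) x = spaceDiv F x + spaceDiv G x := by
  simp [spaceDiv, fderiv_fun_add hF hG, Finset.sum_add_distrib]

theorem spaceDiv_smul {f : E d → ℝ} {F : E d → E d} {f' x : E d}
    (hf : HasGradientAt f f' x) (hF : DifferentiableAt ℝ F x) :
    spaceDiv (fun y => f y • F y) x = ⟪f', F x⟫ + f x * spaceDiv F x := by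
  have hD := ((hasGradientAt_iff_hasFDerivAt.mp hf).fun_smul hF.hasFDerivAt).fderiv
  rw [← InnerProductSpace.toDual_apply_apply, EuclideanSpace.strongDual_apply_eq_sum]
  simp only [spaceDiv, hD]
  simp [Finset.sum_add_distrib, Finset.mul_sum, mul_comm, add_comm]

theorem spaceDiv_id (x : E d) : spaceDiv (fun y : E d => y) x = d := by
  simp [spaceDiv]

theorem spaceDiv_smul_id {f : E d → ℝ} {f' x : E d} (hf : HasGradientAt f f' x) :
    spaceDiv (fun y => f y • y) x = ⟪f', x⟫ + f x * d := by
  rw [spaceDiv_smul hf differentiableAt_fun_id, spaceDiv_id]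

theorem lap_mul_of_hasGradientAt_eq_smul {q ψ : E d → ℝ} {k : ℝ} (hq : ContDiff ℝ 2 q)
    (hψ : ∀ y, HasGradientAt ψ ((k * ψ y) • y) y) (x : E d) :
    lap (fun y => q y * ψ y) x = k * ψ x * ⟪∇ q x, x⟫ + ψ x * lap q x
      + (k * ⟪∇ (fun y => q y * ψ y) x, x⟫ + k * (q x * ψ x) * d) := by
  have hqψ : ∀ y, HasGradientAt (fun y => q y * ψ y) (ψ y • ∇ q y + (k * (q y * ψ y)) • y) y := by
    intro y
    convert (hq.differentiable (by norm_num) y).hasGradientAt.mul (hψ y) using 1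
    module
  have hkqψ : HasGradientAt (fun y => k * (q y * ψ y)) (k • ∇ (fun y => q y * ψ y) x) x := by
    simpa using (hasGradientAt_const x k).mul (hqψ x).differentiableAt.hasGradientAt
  have hψ_diff : DifferentiableAt ℝ (fun y => ψ y • ∇ q y) x :=
    (hψ x).differentiableAt.smul (hq.differentiable_gradient x)
  have hgrad : (fun y => ∇ (fun y => q y * ψ y) y)
      = fun y => ψ y • ∇ q y + (k * (q y * ψ y)) • y :=
    funext fun y => (hqψ y).gradient
  rw [lap, hgrad, spaceDiv_add (G := fun y => (k * (q y * ψ y)) • y) hψ_diff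
      (hkqψ.differentiableAt.smul differentiableAt_fun_id),
    spaceDiv_smul (hψ x) (hq.differentiable_gradient x), spaceDiv_smul_id hkqψ,
    real_inner_smul_left, real_inner_smul_left, real_inner_comm]
  rfl

end Divergence

theorem ratio_solves_transformed_pde_general
    (d : ℕ) (σ : ℝ) (hσ : 0 < σ) (T : ℝ)
    (φ : E d → ℝ)
    (hφ : ∀ x : E d,
      φ x = (2 * Real.pi * σ ^ 2) ^ (-(d : ℝ) / 2) * Real.exp (-‖x‖ ^ 2 / (2 * σ ^ 2)))
    (β : ℝ → ℝ)
    (p : E d → ℝ → ℝ) (hp2 : ContDiff ℝ 2 (fun z : E d × ℝ => p z.1 z.2))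
    (hFP : ∀ (x : E d), ∀ t ∈ Icc (0:ℝ) T,
      deriv (fun τ => p x τ) t
        - β t / 2 * (spaceDiv (fun y => p y t • y) x + σ ^ 2 * lap (fun y => p y t) x) = 0)
    (h : E d → ℝ → ℝ) (hh : ∀ (x : E d) (t : ℝ), h x t = p x t / φ x) :
    ∀ (x : E d), ∀ t ∈ Icc (0:ℝ) T,
      deriv (fun τ => h x τ) t
        - β t / 2 * (-⟪gradient (fun y => h y t) x, x⟫ + σ ^ 2 * lap (fun y => h y t) x)
        = 0 := by
  intro x t ht
  set ψ : E d → ℝ := fun y =>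
    ((2 * π * σ ^ 2) ^ (-(d : ℝ) / 2))⁻¹ * exp ((2 * σ ^ 2)⁻¹ * ‖y‖ ^ 2)
  have hφψ (y : E d) : (φ y)⁻¹ = ψ y := by
    simp only [ψ, hφ, mul_inv, ← exp_neg]
    ring_nf
  have hψ (y : E d) : HasGradientAt ψ (((σ ^ 2)⁻¹ * ψ y) • y) y := by
    convert hasGradientAt_const_mul_exp_mul_norm_sq _ _ y using 3
    field_simp
  clear_value ψ
  have hq : ContDiff ℝ 2 (fun y => p y t) := hp2.comp (contDiff_id.prodMk contDiff_const)
  have h_space : (fun y => h y t) = fun y => p y t * ψ y := by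
    funext y; rw [hh, div_eq_mul_inv, hφψ]
  have h_time : deriv (fun τ => h x τ) t = deriv (fun τ => p x τ) t * ψ x := by
    simp_rw [hh, deriv_div_const, div_eq_mul_inv, hφψ]
  have hFPx := hFP x t ht
  rw [spaceDiv_smul_id (hq.differentiable (by norm_num) x).hasGradientAt] at hFPx
  rw [h_time, h_space, lap_mul_of_hasGradientAt_eq_smul hq hψ]
  have hσ2 : σ ^ 2 ≠ 0 := by positivity
  field_simp
  rw [← mul_eq_zero_of_right (ψ x) hFPx]
  ring

/-- **The ratio `h = p/φ` solves the transformed equation**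
`∂ₜh - (β/2)(-∇h·x + σ²Δh) = 0`. -/
theorem ratio_solves_transformed_pde
    (d : ℕ) (hd : 1 ≤ d) (σ : ℝ) (hσ : 0 < σ) (T : ℝ) (hT : 0 < T)
    (φ : E d → ℝ)
    (hφ : ∀ x : E d,
      φ x = (2 * Real.pi * σ ^ 2) ^ (-(d : ℝ) / 2) * Real.exp (-‖x‖ ^ 2 / (2 * σ ^ 2)))
    (β : ℝ → ℝ) (hβ_cont : ContinuousOn β (Icc 0 T)) (hβ_pos : ∀ t ∈ Icc (0:ℝ) T, 0 < β t)
    (p : E d → ℝ → ℝ) (hp2 : ContDiff ℝ 2 (fun z : E d × ℝ => p z.1 z.2))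
    (hp_pos : ∀ (x : E d), ∀ t ∈ Icc (0:ℝ) T, 0 < p x t)
    (hFP : ∀ (x : E d), ∀ t ∈ Icc (0:ℝ) T,
      deriv (fun τ => p x τ) t
        - β t / 2 * (spaceDiv (fun y => p y t • y) x + σ ^ 2 * lap (fun y => p y t) x) = 0)
    (h : E d → ℝ → ℝ) (hh : ∀ (x : E d) (t : ℝ), h x t = p x t / φ x) :
    ∀ (x : E d), ∀ t ∈ Icc (0:ℝ) T,
      deriv (fun τ => h x τ) t
        - β t / 2 * (-⟪gradient (fun y => h y t) x, x⟫ + σ ^ 2 * lap (fun y => h y t) x)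
        = 0 :=
  ratio_solves_transformed_pde_general d σ hσ T φ hφ β p hp2 hFP h hh
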